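/- Let R be an SMLL net and M_R its SIAM machine. Every state T of M_R reachable from the initial state I_R via the transition relation ⟶ is an injective function. -/

import Mathlib

/-! # SMLL: multiplicative linear logic with synchronization

Formalization of the proof-structures, correctness criterion, reduction and
multi-token machine (SIAM) of Dal Lago, Faggian, Hasuo, Yoshimizu,
"The Geometry of Synchronization". -/

/-- SMLL formulas (in negation normal form):
`A ::= 1 | ⊥ | X | X⊥ | A ⊗ A | A ⅋ A`. -/
inductive Formula : Type
  | one : Formula
  | bot : Formula
  | var : ℕ → Formula
  | covar : ℕ → Formula
  | tens : Formula → Formula → Formula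
  | parr : Formula → Formula → Formula
  deriving DecidableEq

namespace Formula

/-- Linear negation. -/
def dual : Formula → Formula
  | one => bot
  | bot => one
  | var n => covar n
  | covar n => var n
  | tens A B => parr A.dual B.dual
  | parr A B => tens A.dual B.dual

/-- Positive formulas: `P ::= 1 | P ⊗ P`. -/
inductive Positive : Formula → Prop
  | one : Positive one
  | tens {A B : Formula} : Positive A → Positive B → Positive (tens A B)

/-- Negative formulas: `N ::= ⊥ | N ⅋ N`. -/
inductive Negative : Formula → Prop
  | bot : Negative bot
  | parr {A B : Formula} : Negative A → Negative B → Negative (parr A B)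

/-- A formula is polarized when it is positive or negative. -/
def Polarized (A : Formula) : Prop := Positive A ∨ Negative A

/-- Whether `⊥` occurs in a formula. -/
def hasBotB : Formula → Bool
  | one => false
  | bot => true
  | var _ => false
  | covar _ => false
  | tens A B => hasBotB A || hasBotB B
  | parr A B => hasBotB A || hasBotB B

/-- Addresses of occurrences inside a formula: `false` = left, `true` = right. -/
abbrev Addr := List Bool

/-- Subformula at a given address (if the address is meaningful). -/
def sub : Formula → Addr → Option Formula
  | A, [] => some A
  | tens A _, false :: m => sub A m
  | tens _ B, true :: m => sub B m
  | parr A _, false :: m => sub A m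
  | parr _ B, true :: m => sub B m
  | _, _ :: _ => none

def IsAtom : Formula → Prop
  | one => True
  | bot => True
  | var _ => True
  | covar _ => True
  | tens _ _ => False
  | parr _ _ => False

/-- `m` is the address of an occurrence of an atom in `A`. -/
def AtomOcc (A : Formula) (m : Addr) : Prop := ∃ a, sub A m = some a ∧ IsAtom a

/-- The atom occurrence at `m` in `A` is positive (it is `1` or `X`). -/
def PosOcc (A : Formula) (m : Addr) : Prop :=
  ∃ a, sub A m = some a ∧ (a = one ∨ ∃ n, a = var n)

/-- The atom occurrence at `m` in `A` is negative (it is `⊥` or `X⊥`). -/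
def NegOcc (A : Formula) (m : Addr) : Prop :=
  ∃ a, sub A m = some a ∧ (a = bot ∨ ∃ n, a = covar n)

theorem NegOcc.atomOcc {A : Formula} {m : Addr} (h : NegOcc A m) : AtomOcc A m := by
  obtain ⟨a, ha, h⟩ := h
  refine ⟨a, ha, ?_⟩
  rcases h with rfl | ⟨n, rfl⟩ <;> trivial

theorem PosOcc.atomOcc {A : Formula} {m : Addr} (h : PosOcc A m) : AtomOcc A m := by
  obtain ⟨a, ha, h⟩ := h
  refine ⟨a, ha, ?_⟩
  rcases h with rfl | ⟨n, rfl⟩ <;> trivial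

end Formula

/-- The sorts of links of an SMLL structure. -/
inductive LinkSort : Type
  | ax | cut | tens | parr | one | bot | sync
  deriving DecidableEq

/-- An SMLL proof-structure (with boxes): a finite directed multigraph whose
edges are typed by formulas and whose nodes are links.  Every edge is the
conclusion of exactly one link (its `src`); it is the premiss of the link
`tgt`, if any (edges with no target are the conclusions of the structure).
`pIdx` indexes an edge among the premisses of its target (for `⊗`/`⅋`-links:
`0` = left, `1` = right; for sync links it pairs premisses with conclusions);
`cIdx` indexes an edge among the conclusions of its source (for sync links,
the `i`-th conclusion corresponds to the `i`-th premiss).  Each `bot`-link is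
the lock of a box; `box n` is the innermost box containing the node `n` and
`boxes n` is the set of all boxes containing `n`. -/
structure Struct : Type 1 where
  Edge : Type
  Node : Type
  edgeFintype : Fintype Edge
  nodeFintype : Fintype Node
  edgeDecEq : DecidableEq Edge
  nodeDecEq : DecidableEq Node
  typ : Edge → Formula
  sort : Node → LinkSort
  src : Edge → Node
  tgt : Edge → Option Node
  pIdx : Edge → ℕ
  cIdx : Edge → ℕ
  box : Node → Option Node
  boxes : Node → Finset Node

attribute [instance] Struct.edgeFintype Struct.nodeFintype
attribute [instance] Struct.edgeDecEq Struct.nodeDecEq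

namespace Struct

variable (S : Struct)

/-- The conclusions of a link. -/
def concls (n : S.Node) : Finset S.Edge := Finset.univ.filter fun e => S.src e = n

/-- The premisses of a link. -/
def prems (n : S.Node) : Finset S.Edge := Finset.univ.filter fun e => S.tgt e = some n

/-- The conclusions of the structure. -/
def IsConcl (e : S.Edge) : Prop := S.tgt e = none

/-- Well-formedness of an SMLL structure: the constraints that the sort of a
link induces on the number and the types of its premisses and conclusions,
together with the coherence of the nesting of boxes. -/
def WF : Prop :=
  (∀ n, S.sort n = .ax → S.prems n = ∅ ∧
    ∃ e f, e ≠ f ∧ S.concls n = {e, f} ∧ S.typ f = (S.typ e).dual) ∧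
  (∀ n, S.sort n = .cut → S.concls n = ∅ ∧
    ∃ e f, e ≠ f ∧ S.prems n = {e, f} ∧ S.typ f = (S.typ e).dual) ∧
  (∀ n, S.sort n = .tens → ∃ e f g, e ≠ f ∧ S.prems n = {e, f} ∧
    S.pIdx e = 0 ∧ S.pIdx f = 1 ∧ S.concls n = {g} ∧
    S.typ g = .tens (S.typ e) (S.typ f)) ∧
  (∀ n, S.sort n = .parr → ∃ e f g, e ≠ f ∧ S.prems n = {e, f} ∧
    S.pIdx e = 0 ∧ S.pIdx f = 1 ∧ S.concls n = {g} ∧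
    S.typ g = .parr (S.typ e) (S.typ f)) ∧
  (∀ n, S.sort n = .one → S.prems n = ∅ ∧ ∃ e, S.concls n = {e} ∧ S.typ e = .one) ∧
  (∀ n, S.sort n = .bot → S.prems n = ∅ ∧ ∃ e, S.concls n = {e} ∧ S.typ e = .bot) ∧
  (∀ n, S.sort n = .sync →
    (∀ e ∈ S.prems n, (S.typ e).Polarized) ∧
    (∀ e ∈ S.prems n, ∃! f, f ∈ S.concls n ∧ S.cIdx f = S.pIdx e) ∧
    (∀ f ∈ S.concls n, ∃! e, e ∈ S.prems n ∧ S.pIdx e = S.cIdx f) ∧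
    (∀ e ∈ S.prems n, ∀ f ∈ S.concls n, S.cIdx f = S.pIdx e → S.typ f = S.typ e)) ∧
  (∀ n b, b ∈ S.boxes n → S.sort b = .bot) ∧
  (∀ n, S.box n = none → S.boxes n = ∅) ∧
  (∀ n b, S.box n = some b → b ∉ S.boxes b ∧ S.boxes n = insert b (S.boxes b)) ∧
  (∀ e n, S.tgt e = some n → S.boxes n ⊆ S.boxes (S.src e))

/-- `b` is the representative of the node `m` in the level-`ℓ` graph (the
graph in which each box strictly below level `ℓ` is collapsed to a single
box-node, identified with its `bot`-link).  For `ℓ = none` this is the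
`0`-graph. -/
def RepAt (ℓ : Option S.Node) (m b : S.Node) : Prop :=
  (S.box m = ℓ ∧ b = m) ∨ (b ∈ S.boxes m ∧ S.box b = ℓ)

/-- Edge `e` joins the nodes `u` and `v` (undirectedly) in the level-`ℓ` graph. -/
def ConnectsAt (ℓ : Option S.Node) (e : S.Edge) (u v : S.Node) : Prop :=
  ∃ t, S.tgt e = some t ∧ (S.box t = ℓ ∨ S.box (S.src e) = ℓ) ∧
    ((S.RepAt ℓ (S.src e) u ∧ S.RepAt ℓ t v) ∨
     (S.RepAt ℓ (S.src e) v ∧ S.RepAt ℓ t u))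

/-- The out-edges of a sync link are its positive conclusions and its negative
premisses. -/
def OutEdgeOf (l : S.Node) (e : S.Edge) : Prop :=
  S.sort l = .sync ∧
  ((S.src e = l ∧ (S.typ e).Positive) ∨ (S.tgt e = some l ∧ (S.typ e).Negative))

/-- There is a switching cycle in the level-`ℓ` graph: a cyclic undirected
simple path which uses at most one of the two premisses of each `⅋`-link and
at most one out-edge of each sync link. -/
def SwitchingCycleAt (ℓ : Option S.Node) : Prop :=
  ∃ (k : ℕ) (v : Fin (k + 1) → S.Node) (e : Fin (k + 1) → S.Edge),
    Function.Injective v ∧ Function.Injective e ∧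
    (∀ i, S.ConnectsAt ℓ (e i) (v i) (v (i + 1))) ∧
    (∀ p, S.sort p = .parr → Set.Subsingleton {i | S.tgt (e i) = some p}) ∧
    (∀ l, S.sort l = .sync → Set.Subsingleton {i | S.OutEdgeOf l (e i)})

/-- Correctness criterion: no switching cycle in the `0`-graph, and,
recursively, no switching cycle in the graph of the content of any box. -/
def Correct : Prop := ∀ ℓ : Option S.Node, ¬ S.SwitchingCycleAt ℓ

/-- A net is a well-formed correct structure. -/
def IsNet : Prop := S.WF ∧ S.Correct

/-! ## Sync paths and hereditary conclusions -/

/-- One step of a sync path: entering a sync link on a premiss and coming out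
on the corresponding conclusion. -/
def SyncStepE (e f : S.Edge) : Prop :=
  ∃ l, S.sort l = .sync ∧ S.tgt e = some l ∧ S.src f = l ∧ S.cIdx f = S.pIdx e

/-- `e` is a hereditary conclusion of the link `l`: there is a sync path from
a conclusion of `l` to `e`. -/
def HereditaryConcl (l : S.Node) (e : S.Edge) : Prop :=
  ∃ f, S.src f = l ∧ Relation.ReflTransGen S.SyncStepE f e

/-- The edge emerges from a box: its source is a `bot`-link (the edge is the
lock of a box) or lies inside some box. -/
def FromBox (e : S.Edge) : Prop := S.sort (S.src e) = .bot ∨ S.box (S.src e) ≠ none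

/-- `e` is a hereditary conclusion of a box. -/
def HereditaryBoxConcl (e : S.Edge) : Prop :=
  ∃ f, S.FromBox f ∧ Relation.ReflTransGen S.SyncStepE f e

/-- A ready cut: a cut at depth 0 neither of whose premisses is a hereditary
conclusion of a box. -/
def ReadyCut (c : S.Node) : Prop :=
  S.sort c = .cut ∧ S.box c = none ∧ ∀ e ∈ S.prems c, ¬ S.HereditaryBoxConcl e

/-! ## Polarized paths and the order on links -/

/-- A node is polarized when all of its conclusions are polarized. -/
def PolarizedNode (n : S.Node) : Prop := ∀ e ∈ S.concls n, (S.typ e).Polarized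

/-- A single step of a polarized path from link `a` to link `b` along the
polarized edge `e`: downwards on positive edges, upwards on negative edges,
connecting polarized nodes and never entering boxes. -/
def PolStep (e : S.Edge) (a b : S.Node) : Prop :=
  S.box a = none ∧ S.box b = none ∧ S.PolarizedNode a ∧ S.PolarizedNode b ∧
  (((S.typ e).Positive ∧ S.src e = a ∧ S.tgt e = some b) ∨
   ((S.typ e).Negative ∧ S.tgt e = some a ∧ S.src e = b))

/-- `a ≺ b` : there is a (simple) polarized path from `a` to `b`. -/
def prec (a b : S.Node) : Prop :=
  ∃ (k : ℕ) (v : Fin (k + 2) → S.Node) (e : Fin (k + 1) → S.Edge),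
    v 0 = a ∧ v (Fin.last _) = b ∧
    Function.Injective v ∧ Function.Injective e ∧
    ∀ i : Fin (k + 1), S.PolStep (e i) (v i.castSucc) (v i.succ)

/-- SMLL⁰ structures: no unit links (hence no boxes). -/
def UnitFree : Prop := ∀ n : S.Node, S.sort n ≠ .one ∧ S.sort n ≠ .bot

/-- Closed structures: no `⊥` occurs in the conclusions. -/
def Closed : Prop := ∀ e : S.Edge, S.tgt e = none → (S.typ e).hasBotB = false

end Struct

/-! ## Reduction -/

/-- A partial injection `j` whose (some-)range is exactly `X`. -/
def PInjOnto {α β : Type*} (j : α → Option β) (X : Set β) : Prop :=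
  (∀ a a' b, j a = some b → j a' = some b → a = a') ∧
  (∀ a b, j a = some b → b ∈ X) ∧
  (∀ b ∈ X, ∃ a, j a = some b)

/-- `j` is total. -/
def JTotal {α β : Type*} (j : α → Option β) : Prop := ∀ a, j a ≠ none

/-- The structures `Q` and `R` agree, along the correspondences `jN`, `jE`,
on all edges outside `XE` and all nodes outside `XN`. -/
def AgreesOn (Q R : Struct) (jN : Q.Node → Option R.Node)
    (jE : Q.Edge → Option R.Edge) (XE : Set R.Edge) (XN : Set R.Node) : Prop :=
  (∀ x y, jE x = some y → y ∉ XE →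
    Q.typ x = R.typ y ∧ jN (Q.src x) = some (R.src y) ∧
    (Q.tgt x).bind jN = R.tgt y ∧ Q.pIdx x = R.pIdx y ∧ Q.cIdx x = R.cIdx y) ∧
  (∀ n m, jN n = some m → m ∉ XN →
    Q.sort n = R.sort m ∧ (Q.box n).bind jN = R.box m ∧
    (∀ b b', jN b = some b' → (b ∈ Q.boxes n ↔ b' ∈ R.boxes m)))

/-- The `ax/cut` step: a cut between a conclusion `v` of an axiom `a` and the
dual premiss is removed together with the axiom; the remaining conclusion `u`
of the axiom and the remaining premiss `q` of the cut are merged. -/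
def AxCutStep (R Q : Struct) : Prop :=
  ∃ (a c : R.Node) (v u q : R.Edge),
    R.sort a = .ax ∧ R.sort c = .cut ∧ R.box a = none ∧ R.box c = none ∧
    v ≠ u ∧ v ≠ q ∧ u ≠ q ∧
    R.concls a = {v, u} ∧ R.prems c = {v, q} ∧
    ∃ (jN : Q.Node → Option R.Node) (jE : Q.Edge → Option R.Edge),
      JTotal jN ∧ JTotal jE ∧
      PInjOnto jN {n | n ≠ a ∧ n ≠ c} ∧
      PInjOnto jE {x | x ≠ v ∧ x ≠ u} ∧
      AgreesOn Q R jN jE {q} ∅ ∧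
      (∀ x, jE x = some q →
        Q.typ x = R.typ q ∧ jN (Q.src x) = some (R.src q) ∧
        (Q.tgt x).bind jN = R.tgt u ∧ Q.pIdx x = R.pIdx u ∧ Q.cIdx x = R.cIdx q)

/-- The `⊗/⅋` step: a cut between `A ⊗ B` and `A⊥ ⅋ B⊥` is replaced by two
cuts between the respective premisses. -/
def TensParrStep (R Q : Struct) : Prop :=
  ∃ (c t p : R.Node) (s s' a1 a2 b1 b2 : R.Edge),
    R.sort c = .cut ∧ R.sort t = .tens ∧ R.sort p = .parr ∧
    R.box c = none ∧ R.box t = none ∧ R.box p = none ∧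
    s ≠ s' ∧ R.prems c = {s, s'} ∧ R.concls t = {s} ∧ R.concls p = {s'} ∧
    a1 ≠ a2 ∧ R.prems t = {a1, a2} ∧ R.pIdx a1 = 0 ∧ R.pIdx a2 = 1 ∧
    b1 ≠ b2 ∧ R.prems p = {b1, b2} ∧ R.pIdx b1 = 0 ∧ R.pIdx b2 = 1 ∧
    ∃ (jN : Q.Node → Option R.Node) (jE : Q.Edge → Option R.Edge) (c' : Q.Node),
      JTotal jE ∧
      PInjOnto jN {n | n ≠ t ∧ n ≠ p} ∧
      PInjOnto jE {x | x ≠ s ∧ x ≠ s'} ∧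
      jN c' = none ∧ (∀ n, jN n = none → n = c') ∧
      Q.sort c' = .cut ∧ Q.box c' = none ∧ Q.boxes c' = ∅ ∧
      AgreesOn Q R jN jE {a1, a2, b1, b2} ∅ ∧
      (∀ x y, jE x = some y → y = a1 ∨ y = b1 →
        Q.typ x = R.typ y ∧ jN (Q.src x) = some (R.src y) ∧
        (Q.tgt x).bind jN = some c ∧ Q.cIdx x = R.cIdx y) ∧
      (∀ x y, jE x = some y → y = a2 ∨ y = b2 →
        Q.typ x = R.typ y ∧ jN (Q.src x) = some (R.src y) ∧
        Q.tgt x = some c' ∧ Q.cIdx x = R.cIdx y)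

/-- Commutation of a sync link with a `⊗` or `⅋` link: the sync link acting
on the conclusion `z` of the multiplicative link `m` (with corresponding sync
conclusion `w`) is pushed above `m`, now acting on the two premisses `x`, `y`
of `m` via two fresh sync positions (indices `i₁`, `i₂`) with fresh edges
`x'`, `y'`. -/
def SyncMultStep (R Q : Struct) : Prop :=
  ∃ (l m : R.Node) (z w x y : R.Edge) (i₁ i₂ : ℕ),
    R.sort l = .sync ∧ (R.sort m = .tens ∨ R.sort m = .parr) ∧
    R.box l = none ∧ R.box m = none ∧
    R.src z = m ∧ R.tgt z = some l ∧ R.src w = l ∧ R.cIdx w = R.pIdx z ∧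
    x ≠ y ∧ R.prems m = {x, y} ∧ R.pIdx x = 0 ∧ R.pIdx y = 1 ∧
    i₁ ≠ i₂ ∧
    (∀ e, R.tgt e = some l → R.pIdx e ≠ i₁ ∧ R.pIdx e ≠ i₂) ∧
    (∀ e, R.src e = l → R.cIdx e ≠ i₁ ∧ R.cIdx e ≠ i₂) ∧
    ∃ (jN : Q.Node → Option R.Node) (jE : Q.Edge → Option R.Edge)
      (l' m' : Q.Node) (x' y' : Q.Edge),
      JTotal jN ∧ PInjOnto jN Set.univ ∧
      PInjOnto jE {e | e ≠ z} ∧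
      jN l' = some l ∧ jN m' = some m ∧
      x' ≠ y' ∧ jE x' = none ∧ jE y' = none ∧ (∀ e, jE e = none → e = x' ∨ e = y') ∧
      AgreesOn Q R jN jE {x, y, w} ∅ ∧
      (∀ e, jE e = some x →
        Q.typ e = R.typ x ∧ jN (Q.src e) = some (R.src x) ∧
        Q.tgt e = some l' ∧ Q.pIdx e = i₁ ∧ Q.cIdx e = R.cIdx x) ∧
      (∀ e, jE e = some y →
        Q.typ e = R.typ y ∧ jN (Q.src e) = some (R.src y) ∧
        Q.tgt e = some l' ∧ Q.pIdx e = i₂ ∧ Q.cIdx e = R.cIdx y) ∧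
      (∀ e, jE e = some w →
        Q.typ e = R.typ w ∧ Q.src e = m' ∧
        (Q.tgt e).bind jN = R.tgt w ∧ Q.pIdx e = R.pIdx w ∧ Q.cIdx e = R.cIdx w) ∧
      (Q.typ x' = R.typ x ∧ Q.src x' = l' ∧ Q.tgt x' = some m' ∧
        Q.pIdx x' = 0 ∧ Q.cIdx x' = i₁) ∧
      (Q.typ y' = R.typ y ∧ Q.src y' = l' ∧ Q.tgt y' = some m' ∧
        Q.pIdx y' = 1 ∧ Q.cIdx y' = i₂)

/-- Commutation of a sync link with an axiom: a sync link acting on a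
positive conclusion `u` of an axiom (with corresponding conclusion `u'`) is
moved to the axiom's other conclusion `v` (of type `P⊥`), with a fresh sync
position of index `j` and fresh edge `v'`. -/
def SyncAxStep (R Q : Struct) : Prop :=
  ∃ (l a : R.Node) (u u' v : R.Edge) (j : ℕ),
    R.sort l = .sync ∧ R.sort a = .ax ∧ R.box l = none ∧ R.box a = none ∧
    (R.typ u).Positive ∧ u ≠ v ∧ R.concls a = {u, v} ∧
    R.tgt u = some l ∧ R.src u' = l ∧ R.cIdx u' = R.pIdx u ∧ u' ≠ u ∧ u' ≠ v ∧
    (∀ e, R.tgt e = some l → R.pIdx e ≠ j) ∧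
    (∀ e, R.src e = l → R.cIdx e ≠ j) ∧
    ∃ (jN : Q.Node → Option R.Node) (jE : Q.Edge → Option R.Edge)
      (l' a' : Q.Node) (v' : Q.Edge),
      JTotal jN ∧ PInjOnto jN Set.univ ∧ PInjOnto jE {e | e ≠ u} ∧
      jN l' = some l ∧ jN a' = some a ∧
      jE v' = none ∧ (∀ e, jE e = none → e = v') ∧
      AgreesOn Q R jN jE {u', v} ∅ ∧
      (∀ e, jE e = some u' →
        Q.typ e = R.typ u' ∧ Q.src e = a' ∧ Q.cIdx e = R.cIdx u ∧
        (Q.tgt e).bind jN = R.tgt u' ∧ Q.pIdx e = R.pIdx u') ∧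
      (∀ e, jE e = some v →
        Q.typ e = R.typ v ∧ Q.src e = a' ∧ Q.cIdx e = R.cIdx v ∧
        Q.tgt e = some l' ∧ Q.pIdx e = j) ∧
      (Q.typ v' = R.typ v ∧ Q.src v' = l' ∧ Q.cIdx v' = j ∧
        (Q.tgt v').bind jN = R.tgt v ∧ Q.pIdx v' = R.pIdx v)

/-- Commutation of a sync link with a cut: a sync link acting on the premiss
`d'` (of negative type `P⊥`) of a cut is moved to the other premiss `q`. -/
def SyncCutStep (R Q : Struct) : Prop :=
  ∃ (l c : R.Node) (d d' q : R.Edge) (j : ℕ),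
    R.sort l = .sync ∧ R.sort c = .cut ∧ R.box l = none ∧ R.box c = none ∧
    (R.typ d').Negative ∧
    R.src d' = l ∧ R.tgt d' = some c ∧ R.tgt d = some l ∧ R.pIdx d = R.cIdx d' ∧
    d' ≠ q ∧ d ≠ q ∧ d ≠ d' ∧ R.prems c = {d', q} ∧
    (∀ e, R.tgt e = some l → R.pIdx e ≠ j) ∧
    (∀ e, R.src e = l → R.cIdx e ≠ j) ∧
    ∃ (jN : Q.Node → Option R.Node) (jE : Q.Edge → Option R.Edge)
      (l' c' : Q.Node) (q' : Q.Edge),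
      JTotal jN ∧ PInjOnto jN Set.univ ∧ PInjOnto jE {e | e ≠ d'} ∧
      jN l' = some l ∧ jN c' = some c ∧
      jE q' = none ∧ (∀ e, jE e = none → e = q') ∧
      AgreesOn Q R jN jE {d, q} ∅ ∧
      (∀ e, jE e = some d →
        Q.typ e = R.typ d ∧ jN (Q.src e) = some (R.src d) ∧ Q.cIdx e = R.cIdx d ∧
        Q.tgt e = some c' ∧ Q.pIdx e = R.pIdx d') ∧
      (∀ e, jE e = some q →
        Q.typ e = R.typ q ∧ jN (Q.src e) = some (R.src q) ∧ Q.cIdx e = R.cIdx q ∧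
        Q.tgt e = some l' ∧ Q.pIdx e = j) ∧
      (Q.typ q' = R.typ q ∧ Q.src q' = l' ∧ Q.cIdx q' = j ∧
        Q.tgt q' = some c' ∧ Q.pIdx q' = R.pIdx q)

/-- Sync elimination: a sync link all of whose premisses are conclusions of
`one`-links is erased, merging each premiss with its corresponding
conclusion. -/
def SyncElimStep (R Q : Struct) : Prop :=
  ∃ l : R.Node, R.sort l = .sync ∧ R.box l = none ∧
    (∀ e ∈ R.prems l, R.sort (R.src e) = .one) ∧
    ∃ (jN : Q.Node → Option R.Node) (jE : Q.Edge → Option R.Edge),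
      JTotal jN ∧ JTotal jE ∧
      PInjOnto jN {n | n ≠ l} ∧
      PInjOnto jE {e | R.src e ≠ l} ∧
      AgreesOn Q R jN jE {e | R.tgt e = some l} ∅ ∧
      (∀ x e f, jE x = some e → R.tgt e = some l → R.src f = l →
        R.cIdx f = R.pIdx e →
        Q.typ x = R.typ e ∧ jN (Q.src x) = some (R.src e) ∧
        (Q.tgt x).bind jN = R.tgt f ∧ Q.pIdx x = R.pIdx f ∧ Q.cIdx x = R.cIdx e)

/-- The `one/⊥` step (box opening): a cut between the conclusion `o` of a
`one`-link `n₁` and the lock `k` of a box `b` removes the cut, the `one`-link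
and the `bot`-link, and opens the box. -/
def OneBotStep (R Q : Struct) : Prop :=
  ∃ (c n₁ b : R.Node) (o k : R.Edge),
    R.sort c = .cut ∧ R.sort n₁ = .one ∧ R.sort b = .bot ∧
    R.box c = none ∧ R.box n₁ = none ∧ R.box b = none ∧
    o ≠ k ∧ R.prems c = {o, k} ∧ R.src o = n₁ ∧ R.src k = b ∧
    ∃ (jN : Q.Node → Option R.Node) (jE : Q.Edge → Option R.Edge),
      JTotal jN ∧ JTotal jE ∧
      PInjOnto jN {n | n ≠ c ∧ n ≠ n₁ ∧ n ≠ b} ∧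
      PInjOnto jE {e | e ≠ o ∧ e ≠ k} ∧
      (∀ x e, jE x = some e →
        Q.typ x = R.typ e ∧ jN (Q.src x) = some (R.src e) ∧
        (Q.tgt x).bind jN = R.tgt e ∧ Q.pIdx x = R.pIdx e ∧ Q.cIdx x = R.cIdx e) ∧
      (∀ n m, jN n = some m →
        Q.sort n = R.sort m ∧
        (∀ b₀ b₀', jN b₀ = some b₀' → (b₀ ∈ Q.boxes n ↔ b₀' ∈ R.boxes m ∧ b₀' ≠ b)) ∧
        (R.box m = some b → Q.box n = none) ∧
        (R.box m ≠ some b → (Q.box n).bind jN = R.box m))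

/-- The sync-commutation and sync-elimination steps. -/
def SyncRed (R Q : Struct) : Prop :=
  SyncMultStep R Q ∨ SyncAxStep R Q ∨ SyncCutStep R Q ∨ SyncElimStep R Q

/-- The reduction relation `→` on SMLL structures (applied at depth 0 only). -/
def Step (R Q : Struct) : Prop :=
  AxCutStep R Q ∨ TensParrStep R Q ∨ SyncRed R Q ∨ OneBotStep R Q

/-- Isomorphism of structures. -/
def Isom (R Q : Struct) : Prop :=
  ∃ (en : R.Node ≃ Q.Node) (ee : R.Edge ≃ Q.Edge),
    (∀ e, Q.typ (ee e) = R.typ e) ∧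
    (∀ e, Q.src (ee e) = en (R.src e)) ∧
    (∀ e, Q.tgt (ee e) = (R.tgt e).map en) ∧
    (∀ e, Q.pIdx (ee e) = R.pIdx e) ∧
    (∀ e, Q.cIdx (ee e) = R.cIdx e) ∧
    (∀ n, Q.sort (en n) = R.sort n) ∧
    (∀ n, Q.box (en n) = (R.box n).map en) ∧
    (∀ n, Q.boxes (en n) = (R.boxes n).image en)

/-! ## The SIAM: a synchronous interaction abstract machine -/

namespace Struct

variable (S : Struct)

/-- The value of a token: either an occurrence of an atom on an edge, or a
position `(e, i)` on the lock `e` of a box (`BOTBOX`). -/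
inductive PosVal (S : Struct) : Type
  | atom : S.Edge → Formula.Addr → PosVal S
  | lock : S.Edge → ℕ → PosVal S

/-- Initial positions: negative atom occurrences in the conclusions. -/
def InitPos (p : S.Edge × Formula.Addr) : Prop :=
  S.tgt p.1 = none ∧ Formula.NegOcc (S.typ p.1) p.2

/-- Final positions: positive atom occurrences in the conclusions. -/
def FinPos (p : S.Edge × Formula.Addr) : Prop :=
  S.tgt p.1 = none ∧ Formula.PosOcc (S.typ p.1) p.2

/-- One positions: conclusions of `one`-links. -/
def OnePos (p : S.Edge × Formula.Addr) : Prop :=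
  S.sort (S.src p.1) = .one ∧ p.2 = []

/-- Valid token values: genuine atom occurrences, or positions on the lock of
a box. -/
def ValidVal : PosVal S → Prop
  | .atom e m => Formula.AtomOcc (S.typ e) m
  | .lock e _ => S.sort (S.src e) = .bot

end Struct

/-- A state of the SIAM machine `M_S`: a (partial) function from
`INIT(S) ∪ L` (with `L ⊆ ONES(S)`) to the positions of `S`; it records, for
each token, its origin and its current position. -/
structure SState (S : Struct) where
  f : S.Edge × Formula.Addr → Option (Struct.PosVal S)
  dom_subset : ∀ p, f p ≠ none → S.InitPos p ∨ S.OnePos p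
  init_total : ∀ p, S.InitPos p → f p ≠ none
  val_valid : ∀ p v, f p = some v → S.ValidVal v

namespace Struct

variable (S : Struct)

/-- The box `b` is unlocked in state `T`: some token sits on its lock. -/
def Unlocked (T : SState S) (b : S.Node) : Prop :=
  ∃ p e i, T.f p = some (.lock e i) ∧ S.src e = b

/-- A link is active: all the boxes containing it are unlocked. -/
def Active (T : SState S) (n : S.Node) : Prop :=
  ∀ b ∈ S.boxes n, S.Unlocked T b

end Struct

open Classical in
/-- The initial state `I_S`: the identity on the initial positions. -/
noncomputable def initState (S : Struct) : SState S where
  f := fun p => if S.InitPos p then some (.atom p.1 p.2) else none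
  dom_subset := by
    intro p hp
    by_cases h : S.InitPos p
    · exact Or.inl h
    · simp [h] at hp
  init_total := by intro p hp; simp [hp]
  val_valid := by
    intro p v hv
    by_cases h : S.InitPos p
    · simp only [if_pos h, Option.some.injEq] at hv
      subst hv
      exact h.2.atomOcc
    · simp [h] at hv

/-- The transition relation of the SIAM.  Tokens on negative atom occurrences
move upwards, tokens on positive atom occurrences move downwards; all tokens
cross a sync link simultaneously, when each of its in-edges is saturated;
active `one`-links may spawn a token; a token reaching the lock of a box
unlocks it.  Tokens may only cross active links (so they can enter a box only
when it is unlocked). -/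
inductive STrans (S : Struct) : SState S → SState S → Prop
  | axUp {T T' : SState S} {p : S.Edge × Formula.Addr} {e e' : S.Edge}
      {m : Formula.Addr} {a : S.Node} :
      T.f p = some (.atom e m) →
      Formula.NegOcc (S.typ e) m →
      S.src e = a → S.sort a = .ax → S.Active T a →
      S.src e' = a → e' ≠ e →
      (∀ q, q ≠ p → T'.f q = T.f q) →
      T'.f p = some (.atom e' m) →
      STrans S T T'
  | cutDown {T T' : SState S} {p : S.Edge × Formula.Addr} {e e' : S.Edge}
      {m : Formula.Addr} {c : S.Node} :
      T.f p = some (.atom e m) →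
      Formula.PosOcc (S.typ e) m →
      S.tgt e = some c → S.sort c = .cut → S.Active T c →
      S.tgt e' = some c → e' ≠ e →
      (∀ q, q ≠ p → T'.f q = T.f q) →
      T'.f p = some (.atom e' m) →
      STrans S T T'
  | multDown {T T' : SState S} {p : S.Edge × Formula.Addr} {e g : S.Edge}
      {m : Formula.Addr} {n : S.Node} {b : Bool} :
      T.f p = some (.atom e m) →
      Formula.PosOcc (S.typ e) m →
      S.tgt e = some n → (S.sort n = .tens ∨ S.sort n = .parr) → S.Active T n →
      S.src g = n →
      S.pIdx e = (if b then 1 else 0) →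
      (∀ q, q ≠ p → T'.f q = T.f q) →
      T'.f p = some (.atom g (b :: m)) →
      STrans S T T'
  | multUp {T T' : SState S} {p : S.Edge × Formula.Addr} {e g : S.Edge}
      {m : Formula.Addr} {n : S.Node} {b : Bool} :
      T.f p = some (.atom g (b :: m)) →
      Formula.NegOcc (S.typ g) (b :: m) →
      S.src g = n → (S.sort n = .tens ∨ S.sort n = .parr) → S.Active T n →
      S.tgt e = some n →
      S.pIdx e = (if b then 1 else 0) →
      (∀ q, q ≠ p → T'.f q = T.f q) →
      T'.f p = some (.atom e m) →
      STrans S T T'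
  | lockTok {T T' : SState S} {p : S.Edge × Formula.Addr} {e : S.Edge}
      {b' : S.Node} :
      T.f p = some (.atom e []) →
      S.typ e = .bot →
      S.src e = b' → S.sort b' = .bot → S.Active T b' →
      (∀ q, q ≠ p → T'.f q = T.f q) →
      T'.f p = some (.lock e 0) →
      STrans S T T'
  | oneSpawn {T T' : SState S} {n : S.Node} {e : S.Edge} :
      S.sort n = .one → S.Active T n → S.src e = n →
      T.f (e, []) = none →
      (∀ q, q ≠ (e, []) → T'.f q = T.f q) →
      T'.f (e, []) = some (.atom e []) →
      STrans S T T'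
  | syncCross {T T' : SState S} {l : S.Node} :
      S.sort l = .sync → S.Active T l →
      (∃ q e m, T.f q = some (.atom e m) ∧
        ((S.tgt e = some l ∧ (S.typ e).Positive) ∨
         (S.src e = l ∧ (S.typ e).Negative))) →
      (∀ e, ((S.tgt e = some l ∧ (S.typ e).Positive) ∨
             (S.src e = l ∧ (S.typ e).Negative)) →
        ∀ m, Formula.AtomOcc (S.typ e) m → ∃ q, T.f q = some (.atom e m)) →
      (∀ q e m, T.f q = some (.atom e m) → S.tgt e = some l → (S.typ e).Positive →
        ∃ e', S.src e' = l ∧ S.cIdx e' = S.pIdx e ∧ T'.f q = some (.atom e' m)) →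
      (∀ q e m, T.f q = some (.atom e m) → S.src e = l → (S.typ e).Negative →
        ∃ e', S.tgt e' = some l ∧ S.pIdx e' = S.cIdx e ∧ T'.f q = some (.atom e' m)) →
      (∀ q, (∀ e m, T.f q = some (.atom e m) →
          ¬(S.tgt e = some l ∧ (S.typ e).Positive) ∧
          ¬(S.src e = l ∧ (S.typ e).Negative)) →
        T'.f q = T.f q) →
      STrans S T T'

/-- A final state: its image consists of all the final positions together
with positions on the locks of boxes. -/
def SState.Final {S : Struct} (T : SState S) : Prop :=
  (∀ q v, T.f q = some v →
    (∃ e m, v = .atom e m ∧ S.FinPos (e, m)) ∨ (∃ e i, v = .lock e i)) ∧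
  (∀ e m, S.FinPos (e, m) → ∃ q, T.f q = some (.atom e m))

/-- The machine of `S` deadlocks: some maximal transition sequence from the
initial state ends in a non-final state. -/
def Deadlocks (S : Struct) : Prop :=
  ∃ T : SState S, Relation.ReflTransGen (STrans S) (initState S) T ∧
    (∀ T', ¬ STrans S T T') ∧ ¬ T.Final

/-- The machine of `S` is deadlock free: every maximal transition sequence
from the initial state ends in a final state. -/
def DeadlockFree (S : Struct) : Prop :=
  ∀ T : SState S, Relation.ReflTransGen (STrans S) (initState S) T →
    (∀ T', ¬ STrans S T T') → T.Final

/-! ## The closure of a net -/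

/-- A structure with a designated (main) conclusion. -/
structure PNet : Type 1 where
  S : Struct
  main : S.Edge

/-- The net consisting of a single `one`-link. -/
def oneNet : PNet where
  S :=
    { Edge := Unit
      Node := Unit
      edgeFintype := inferInstance
      nodeFintype := inferInstance
      edgeDecEq := inferInstance
      nodeDecEq := inferInstance
      typ := fun _ => .one
      sort := fun _ => .one
      src := fun _ => ()
      tgt := fun _ => none
      pIdx := fun _ => 0
      cIdx := fun _ => 0
      box := fun _ => none
      boxes := fun _ => ∅ }
  main := ()

/-- The net consisting of a single axiom of conclusions `A⊥, A`, with main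
conclusion `A`. -/
def axNet (A : Formula) : PNet where
  S :=
    { Edge := Bool
      Node := Unit
      edgeFintype := inferInstance
      nodeFintype := inferInstance
      edgeDecEq := inferInstance
      nodeDecEq := inferInstance
      typ := fun e => if e then A else A.dual
      sort := fun _ => .ax
      src := fun _ => ()
      tgt := fun _ => none
      pIdx := fun _ => 0
      cIdx := fun e => if e then 1 else 0
      box := fun _ => none
      boxes := fun _ => ∅ }
  main := true

/-- Joining the main conclusions of two nets by a binary link of sort `s`
and conclusion type `C`. -/
def joinNet (s : LinkSort) (C : Formula) (P Q : PNet) : PNet where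
  S :=
    { Edge := Option (P.S.Edge ⊕ Q.S.Edge)
      Node := Option (P.S.Node ⊕ Q.S.Node)
      edgeFintype := inferInstance
      nodeFintype := inferInstance
      edgeDecEq := inferInstance
      nodeDecEq := inferInstance
      typ := fun e =>
        match e with
        | none => C
        | some (.inl x) => P.S.typ x
        | some (.inr y) => Q.S.typ y
      sort := fun n =>
        match n with
        | none => s
        | some (.inl x) => P.S.sort x
        | some (.inr y) => Q.S.sort y
      src := fun e =>
        match e with
        | none => none
        | some (.inl x) => some (.inl (P.S.src x))
        | some (.inr y) => some (.inr (Q.S.src y))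
      tgt := fun e =>
        match e with
        | none => none
        | some (.inl x) =>
            if x = P.main then some none
            else (P.S.tgt x).map fun n => some (.inl n)
        | some (.inr y) =>
            if y = Q.main then some none
            else (Q.S.tgt y).map fun n => some (.inr n)
      pIdx := fun e =>
        match e with
        | none => 0
        | some (.inl x) => if x = P.main then 0 else P.S.pIdx x
        | some (.inr y) => if y = Q.main then 1 else Q.S.pIdx y
      cIdx := fun e =>
        match e with
        | none => 0
        | some (.inl x) => P.S.cIdx x
        | some (.inr y) => Q.S.cIdx y
      box := fun n =>
        match n with
        | none => none
        | some (.inl x) => (P.S.box x).map fun m => some (.inl m)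
        | some (.inr y) => (Q.S.box y).map fun m => some (.inr m)
      boxes := fun n =>
        match n with
        | none => ∅
        | some (.inl x) => (P.S.boxes x).image fun m => some (.inl m)
        | some (.inr y) => (Q.S.boxes y).image fun m => some (.inr m) }
  main := none

/-- The net `R°(A)`, by induction on `A`: it has conclusions `Γ, A` with no
occurrence of `⊥` in `Γ`, and main conclusion `A`. -/
def circNet : Formula → PNet
  | .one => oneNet
  | .bot => axNet .bot
  | .var n => axNet (.var n)
  | .covar n => axNet (.covar n)
  | .tens A B => joinNet .tens (.tens A B) (circNet A) (circNet B)
  | .parr A B => joinNet .parr (.parr A B) (circNet A) (circNet B)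

/-- The conclusions of `R` containing an occurrence of `⊥`. -/
abbrev BadC (R : Struct) :=
  {e : R.Edge // R.tgt e = none ∧ (R.typ e).hasBotB = true}

/-- The closure `R̂` of `R`: each conclusion `A` of `R` containing `⊥` is cut
against the main conclusion of a copy of `R°(A⊥)`. -/
def netClosure (R : Struct) : Struct where
  Edge := R.Edge ⊕ Σ e : BadC R, (circNet (R.typ e.val).dual).S.Edge
  Node := R.Node ⊕ ((Σ e : BadC R, (circNet (R.typ e.val).dual).S.Node) ⊕ BadC R)
  edgeFintype := inferInstance
  nodeFintype := inferInstance
  edgeDecEq := inferInstance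
  nodeDecEq := inferInstance
  typ := fun e =>
    match e with
    | .inl e => R.typ e
    | .inr ⟨b, x⟩ => (circNet (R.typ b.val).dual).S.typ x
  sort := fun n =>
    match n with
    | .inl n => R.sort n
    | .inr (.inl ⟨b, x⟩) => (circNet (R.typ b.val).dual).S.sort x
    | .inr (.inr _) => .cut
  src := fun e =>
    match e with
    | .inl e => .inl (R.src e)
    | .inr ⟨b, x⟩ => .inr (.inl ⟨b, (circNet (R.typ b.val).dual).S.src x⟩)
  tgt := fun e =>
    match e with
    | .inl e =>
        if h : R.tgt e = none ∧ (R.typ e).hasBotB = true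
        then some (.inr (.inr ⟨e, h⟩))
        else (R.tgt e).map Sum.inl
    | .inr ⟨b, x⟩ =>
        if x = (circNet (R.typ b.val).dual).main
        then some (.inr (.inr b))
        else ((circNet (R.typ b.val).dual).S.tgt x).map fun n => .inr (.inl ⟨b, n⟩)
  pIdx := fun e =>
    match e with
    | .inl e => R.pIdx e
    | .inr ⟨b, x⟩ =>
        if x = (circNet (R.typ b.val).dual).main then 1
        else (circNet (R.typ b.val).dual).S.pIdx x
  cIdx := fun e =>
    match e with
    | .inl e => R.cIdx e
    | .inr ⟨b, x⟩ => (circNet (R.typ b.val).dual).S.cIdx x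
  box := fun n =>
    match n with
    | .inl n => (R.box n).map Sum.inl
    | .inr (.inl ⟨b, x⟩) =>
        ((circNet (R.typ b.val).dual).S.box x).map fun m => .inr (.inl ⟨b, m⟩)
    | .inr (.inr _) => none
  boxes := fun n =>
    match n with
    | .inl n => (R.boxes n).image Sum.inl
    | .inr (.inl ⟨b, x⟩) =>
        ((circNet (R.typ b.val).dual).S.boxes x).image fun m => .inr (.inl ⟨b, m⟩)
    | .inr (.inr _) => ∅

/-! Reading the SIAM rules backwards, a token position has at most one possible predecessor:
a positive occurrence can only have been reached through the link above its edge, a negative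
one through the link below it, and an open lock only from the closed one; well-formedness makes
that link's conclusion or premiss unique. So in a reachable state every token sits at the end
of a deterministic backward path leading to its origin, and origins (negative occurrences in
the conclusions, conclusions of `one`-links) admit no backward step. Two tokens at the same
position therefore share the whole backward path, hence their origin. -/

namespace Formula

theorem sub_dual : ∀ (A : Formula) (m : Addr), A.dual.sub m = (A.sub m).map dual
  | A, [] => by cases A <;> rfl
  | .tens A _, false :: m => sub_dual A m
  | .tens _ B, true :: m => sub_dual B m
  | .parr A _, false :: m => sub_dual A m
  | .parr _ B, true :: m => sub_dual B m
  | .one, b :: _ | .bot, b :: _ | .var _, b :: _ | .covar _, b :: _ => by cases b <;> rfl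

theorem posOcc_dual_iff {A : Formula} {m : Addr} : PosOcc A.dual m ↔ NegOcc A m := by
  rw [PosOcc, NegOcc, sub_dual]
  cases A.sub m with
  | none => simp
  | some a => cases a <;> simp [dual]

theorem negOcc_dual_iff {A : Formula} {m : Addr} : NegOcc A.dual m ↔ PosOcc A m := by
  rw [PosOcc, NegOcc, sub_dual]
  cases A.sub m with
  | none => simp
  | some a => cases a <;> simp [dual]

theorem PosOcc.not_negOcc {A : Formula} {m : Addr} (h : PosOcc A m) : ¬ NegOcc A m := by
  obtain ⟨a, ha, hpos⟩ := h
  rintro ⟨b, hb, hneg⟩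
  obtain rfl : a = b := Option.some_injective _ (ha.symm.trans hb)
  rcases hpos with rfl | ⟨_, rfl⟩ <;> rcases hneg with h | ⟨_, h⟩ <;> cases h

theorem Positive.posOcc {A : Formula} (h : Positive A) {m : Addr} (hm : AtomOcc A m) :
    PosOcc A m := by
  induction h generalizing m with
  | one =>
    obtain ⟨a, ha, -⟩ := hm
    cases m with
    | nil => exact ⟨Formula.one, rfl, Or.inl rfl⟩
    | cons b m => cases b <;> cases ha
  | tens _ _ ihA ihB =>
    obtain ⟨a, ha, hat⟩ := hm
    match m with
    | [] => cases ha; cases hat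
    | false :: m => exact ihA ⟨a, ha, hat⟩
    | true :: m => exact ihB ⟨a, ha, hat⟩

theorem Negative.negOcc {A : Formula} (h : Negative A) {m : Addr} (hm : AtomOcc A m) :
    NegOcc A m := by
  induction h generalizing m with
  | bot =>
    obtain ⟨a, ha, -⟩ := hm
    cases m with
    | nil => exact ⟨Formula.bot, rfl, Or.inl rfl⟩
    | cons b m => cases b <;> cases ha
  | parr _ _ ihA ihB =>
    obtain ⟨a, ha, hat⟩ := hm
    match m with
    | [] => cases ha; cases hat
    | false :: m => exact ihA ⟨a, ha, hat⟩
    | true :: m => exact ihB ⟨a, ha, hat⟩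

end Formula

theorem Finset.eq_of_mem_pair_of_ne {α : Type*} [DecidableEq α] {a b x y z : α}
    (hx : x ∈ ({a, b} : Finset α)) (hy : y ∈ ({a, b} : Finset α))
    (hz : z ∈ ({a, b} : Finset α)) (hxz : x ≠ z) (hyz : y ≠ z) : x = y := by
  simp only [Finset.mem_insert, Finset.mem_singleton] at hx hy hz
  grind

theorem Relation.ReflTransGen.eq_of_rightUnique {α : Type*} {r : α → α → Prop} {a b c : α}
    (hr : Relator.RightUnique r) (hab : ReflTransGen r a b) (hac : ReflTransGen r a c)
    (hb : ∀ x, ¬ r b x) (hc : ∀ x, ¬ r c x) : b = c := by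
  rcases total_of_right_unique hr hab hac with h | h
  · exact ((reflTransGen_iff_eq hb).1 h).symm
  · exact (reflTransGen_iff_eq hc).1 h

namespace Struct

open Formula

variable {S : Struct}

@[simp]
theorem mem_concls {n : S.Node} {e : S.Edge} : e ∈ S.concls n ↔ S.src e = n := by
  simp [concls]

@[simp]
theorem mem_prems {n : S.Node} {e : S.Edge} : e ∈ S.prems n ↔ S.tgt e = some n := by
  simp [prems]

namespace WF

theorem ax_concl_eq (hWF : S.WF) {a : S.Node} (ha : S.sort a = .ax) {x y z : S.Edge}
    (hx : S.src x = a) (hy : S.src y = a) (hz : S.src z = a) (hxz : x ≠ z) (hyz : y ≠ z) :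
    x = y := by
  obtain ⟨-, e, f, -, hconcls, -⟩ := hWF.1 a ha
  simp only [Finset.ext_iff, mem_concls] at hconcls
  exact Finset.eq_of_mem_pair_of_ne ((hconcls x).1 hx) ((hconcls y).1 hy) ((hconcls z).1 hz)
    hxz hyz

theorem cut_prem_eq (hWF : S.WF) {c : S.Node} (hc : S.sort c = .cut) {x y z : S.Edge}
    (hx : S.tgt x = some c) (hy : S.tgt y = some c) (hz : S.tgt z = some c)
    (hxz : x ≠ z) (hyz : y ≠ z) : x = y := by
  obtain ⟨-, e, f, -, hprems, -⟩ := hWF.2.1 c hc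
  simp only [Finset.ext_iff, mem_prems] at hprems
  exact Finset.eq_of_mem_pair_of_ne ((hprems x).1 hx) ((hprems y).1 hy) ((hprems z).1 hz)
    hxz hyz

theorem posOcc_of_ax (hWF : S.WF) {a : S.Node} (ha : S.sort a = .ax) {x y : S.Edge} {m : Addr}
    (hx : S.src x = a) (hy : S.src y = a) (hxy : x ≠ y) (h : NegOcc (S.typ x) m) :
    PosOcc (S.typ y) m := by
  obtain ⟨-, e, f, -, hconcls, hdual⟩ := hWF.1 a ha
  simp only [Finset.ext_iff, mem_concls, Finset.mem_insert, Finset.mem_singleton] at hconcls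
  rcases (hconcls x).1 hx with rfl | rfl <;> rcases (hconcls y).1 hy with rfl | rfl
  · exact absurd rfl hxy
  · rwa [hdual, posOcc_dual_iff]
  · rwa [hdual, negOcc_dual_iff] at h
  · exact absurd rfl hxy

theorem negOcc_of_cut (hWF : S.WF) {c : S.Node} (hc : S.sort c = .cut) {x y : S.Edge} {m : Addr}
    (hx : S.tgt x = some c) (hy : S.tgt y = some c) (hxy : x ≠ y) (h : PosOcc (S.typ x) m) :
    NegOcc (S.typ y) m := by
  obtain ⟨-, e, f, -, hprems, hdual⟩ := hWF.2.1 c hc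
  simp only [Finset.ext_iff, mem_prems, Finset.mem_insert, Finset.mem_singleton] at hprems
  rcases (hprems x).1 hx with rfl | rfl <;> rcases (hprems y).1 hy with rfl | rfl
  · exact absurd rfl hxy
  · rwa [hdual, negOcc_dual_iff]
  · rwa [hdual, posOcc_dual_iff] at h
  · exact absurd rfl hxy

theorem exists_mult_spec (hWF : S.WF) {n : S.Node} (hn : S.sort n = .tens ∨ S.sort n = .parr) :
    ∃ e f g, S.prems n = {e, f} ∧ S.pIdx e = 0 ∧ S.pIdx f = 1 ∧ S.concls n = {g} ∧
      (S.typ g = .tens (S.typ e) (S.typ f) ∨ S.typ g = .parr (S.typ e) (S.typ f)) := by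
  rcases hn with hn | hn
  · obtain ⟨e, f, g, -, h⟩ := hWF.2.2.1 n hn
    exact ⟨e, f, g, by tauto⟩
  · obtain ⟨e, f, g, -, h⟩ := hWF.2.2.2.1 n hn
    exact ⟨e, f, g, by tauto⟩

theorem mult_concl_eq (hWF : S.WF) {n : S.Node} (hn : S.sort n = .tens ∨ S.sort n = .parr)
    {x y : S.Edge} (hx : S.src x = n) (hy : S.src y = n) : x = y := by
  obtain ⟨-, -, g, -, -, -, hconcls, -⟩ := hWF.exists_mult_spec hn
  simp only [Finset.ext_iff, mem_concls, Finset.mem_singleton] at hconcls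
  rw [(hconcls x).1 hx, (hconcls y).1 hy]

theorem mult_prem_eq (hWF : S.WF) {n : S.Node} (hn : S.sort n = .tens ∨ S.sort n = .parr)
    {x y : S.Edge} (hx : S.tgt x = some n) (hy : S.tgt y = some n)
    (hxy : S.pIdx x = S.pIdx y) : x = y := by
  obtain ⟨e, f, -, hprems, he, hf, -⟩ := hWF.exists_mult_spec hn
  simp only [Finset.ext_iff, mem_prems, Finset.mem_insert, Finset.mem_singleton] at hprems
  rcases (hprems x).1 hx with rfl | rfl <;> rcases (hprems y).1 hy with rfl | rfl <;> grind

theorem sub_mult_concl (hWF : S.WF) {n : S.Node} (hn : S.sort n = .tens ∨ S.sort n = .parr)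
    {g e : S.Edge} {b : Bool} (hg : S.src g = n) (he : S.tgt e = some n)
    (hb : S.pIdx e = if b then 1 else 0) (m : Addr) : (S.typ g).sub (b :: m) = (S.typ e).sub m := by
  obtain ⟨e₀, e₁, g₀, hprems, h₀, h₁, hconcls, htyp⟩ := hWF.exists_mult_spec hn
  simp only [Finset.ext_iff, mem_prems, mem_concls, Finset.mem_insert,
    Finset.mem_singleton] at hprems hconcls
  obtain rfl := (hconcls g).1 hg
  obtain rfl : e = if b then e₁ else e₀ := by
    rcases (hprems e).1 he with rfl | rfl <;> cases b <;> simp_all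
  rcases htyp with h | h <;> cases b <;> simp [h, Formula.sub]

theorem sync_prem_eq (hWF : S.WF) {l : S.Node} (hl : S.sort l = .sync) {f x y : S.Edge}
    (hf : S.src f = l) (hx : S.tgt x = some l) (hxf : S.pIdx x = S.cIdx f)
    (hy : S.tgt y = some l) (hyf : S.pIdx y = S.cIdx f) : x = y := by
  obtain ⟨-, -, hunique, -⟩ := hWF.2.2.2.2.2.2.1 l hl
  exact (hunique f (mem_concls.2 hf)).unique ⟨mem_prems.2 hx, hxf⟩ ⟨mem_prems.2 hy, hyf⟩

theorem sync_concl_eq (hWF : S.WF) {l : S.Node} (hl : S.sort l = .sync) {e x y : S.Edge}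
    (he : S.tgt e = some l) (hx : S.src x = l) (hxe : S.cIdx x = S.pIdx e)
    (hy : S.src y = l) (hye : S.cIdx y = S.pIdx e) : x = y := by
  obtain ⟨-, hunique, -, -⟩ := hWF.2.2.2.2.2.2.1 l hl
  exact (hunique e (mem_prems.2 he)).unique ⟨mem_concls.2 hx, hxe⟩ ⟨mem_concls.2 hy, hye⟩

theorem sync_typ (hWF : S.WF) {l : S.Node} (hl : S.sort l = .sync) {e f : S.Edge}
    (he : S.tgt e = some l) (hf : S.src f = l) (hef : S.cIdx f = S.pIdx e) :
    S.typ f = S.typ e :=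
  (hWF.2.2.2.2.2.2.1 l hl).2.2.2 e (mem_prems.2 he) f (mem_concls.2 hf) hef

theorem typ_of_one (hWF : S.WF) {e : S.Edge} (h : S.sort (S.src e) = .one) : S.typ e = .one := by
  obtain ⟨-, e₀, hconcls, htyp⟩ := hWF.2.2.2.2.1 (S.src e) h
  simp only [Finset.ext_iff, mem_concls, Finset.mem_singleton] at hconcls
  rw [(hconcls e).1 rfl, htyp]

end WF

/-- `PredViaSrc p q` (resp. `PredViaTgt p q`): a token at `p` can have been moved there from `q`
across the source (resp. target) link of the edge of `p`. -/
inductive PredViaSrc (S : Struct) : S.Edge × Addr → S.Edge × Addr → Prop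
  | ax {e e' : S.Edge} {m : Addr} :
      S.sort (S.src e') = .ax → S.src e = S.src e' → e ≠ e' → PredViaSrc S (e', m) (e, m)
  | mult {e e' : S.Edge} {m : Addr} {b : Bool} :
      (S.sort (S.src e') = .tens ∨ S.sort (S.src e') = .parr) →
      S.tgt e = some (S.src e') → S.pIdx e = (if b then 1 else 0) →
      PredViaSrc S (e', b :: m) (e, m)
  | sync {e e' : S.Edge} {m : Addr} :
      S.sort (S.src e') = .sync → S.tgt e = some (S.src e') → S.pIdx e = S.cIdx e' →
      PredViaSrc S (e', m) (e, m)

inductive PredViaTgt (S : Struct) : S.Edge × Addr → S.Edge × Addr → Prop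
  | cut {e e' : S.Edge} {m : Addr} {c : S.Node} :
      S.tgt e' = some c → S.sort c = .cut → S.tgt e = some c → e ≠ e' →
      PredViaTgt S (e', m) (e, m)
  | mult {e e' : S.Edge} {m : Addr} {b : Bool} {n : S.Node} :
      S.tgt e' = some n → (S.sort n = .tens ∨ S.sort n = .parr) → S.src e = n →
      S.pIdx e' = (if b then 1 else 0) → PredViaTgt S (e', m) (e, b :: m)
  | sync {e e' : S.Edge} {m : Addr} {l : S.Node} :
      S.tgt e' = some l → S.sort l = .sync → S.src e = l → S.cIdx e = S.pIdx e' →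
      PredViaTgt S (e', m) (e, m)

/-- One SIAM move read backwards: positive tokens move downwards, so they come from the source
link of their edge, negative ones from its target link. -/
inductive BackStep (S : Struct) : PosVal S → PosVal S → Prop
  | pos {e' e : S.Edge} {m' m : Addr} :
      PosOcc (S.typ e') m' → S.PredViaSrc (e', m') (e, m) → BackStep S (.atom e' m') (.atom e m)
  | neg {e' e : S.Edge} {m' m : Addr} :
      NegOcc (S.typ e') m' → S.PredViaTgt (e', m') (e, m) → BackStep S (.atom e' m') (.atom e m)
  | lock {e : S.Edge} {i : ℕ} : BackStep S (.lock e i) (.atom e [])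

theorem WF.predViaSrc_rightUnique (hWF : S.WF) : Relator.RightUnique S.PredViaSrc
  | _, _, _, .ax ha hx hxz, .ax _ hy hyz => by rw [hWF.ax_concl_eq ha hx hy rfl hxz hyz]
  | _, _, _, .mult hn hx hbx, .mult _ hy hby => by
    rw [hWF.mult_prem_eq hn hx hy (hbx.trans hby.symm)]
  | _, _, _, .sync hl hx hxf, .sync _ hy hyf => by rw [hWF.sync_prem_eq hl rfl hx hxf hy hyf]
  | _, _, _, .ax .., .mult .. | _, _, _, .mult .., .ax .. => by simp_all
  | _, _, _, .ax .., .sync .. | _, _, _, .sync .., .ax .. => by simp_all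
  | _, _, _, .mult .., .sync .. | _, _, _, .sync .., .mult .. => by simp_all

theorem WF.predViaTgt_rightUnique (hWF : S.WF) : Relator.RightUnique S.PredViaTgt
  | _, _, _, .cut hc hcut hx hxz, .cut hc' _ hy hyz => by
    cases hc.symm.trans hc'
    rw [hWF.cut_prem_eq hcut hx hy hc hxz hyz]
  | _, _, _, .mult (b := b) hn hm hx hbx, .mult (b := b') hn' _ hy hby => by
    cases hn.symm.trans hn'
    rw [hWF.mult_concl_eq hm hx hy]
    cases b <;> cases b' <;> simp_all
  | _, _, _, .sync hl hsync hx hxe, .sync hl' _ hy hye => by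
    cases hl.symm.trans hl'
    rw [hWF.sync_concl_eq hsync hl hx hxe hy hye]
  | _, _, _, .cut .., .mult .. | _, _, _, .mult .., .cut .. => by simp_all
  | _, _, _, .cut .., .sync .. | _, _, _, .sync .., .cut .. => by simp_all
  | _, _, _, .mult .., .sync .. | _, _, _, .sync .., .mult .. => by simp_all

theorem WF.backStep_rightUnique (hWF : S.WF) : Relator.RightUnique S.BackStep
  | _, _, _, .pos _ h, .pos _ h' => by cases hWF.predViaSrc_rightUnique h h'; rfl
  | _, _, _, .neg _ h, .neg _ h' => by cases hWF.predViaTgt_rightUnique h h'; rfl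
  | _, _, _, .pos hp _, .neg hn _ | _, _, _, .neg hn _, .pos hp _ => absurd hn hp.not_negOcc
  | _, _, _, .lock, .lock => rfl

theorem WF.not_backStep_of_origin (hWF : S.WF) {p : S.Edge × Addr}
    (hp : S.InitPos p ∨ S.OnePos p) (v : PosVal S) : ¬ S.BackStep (.atom p.1 p.2) v := by
  obtain ⟨e, m⟩ := p
  rintro (⟨hpos, h⟩ | ⟨hneg, h⟩)
  · rcases hp with ⟨-, hneg⟩ | ⟨hone, rfl⟩
    · exact hpos.not_negOcc hneg
    · cases h <;> simp_all
  · rcases hp with ⟨hconcl, -⟩ | ⟨hone, rfl⟩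
    · cases h <;> simp_all
    · rw [hWF.typ_of_one hone] at hneg
      exact (Positive.one.posOcc ⟨Formula.one, rfl, trivial⟩).not_negOcc hneg

theorem WF.backStep_ax (hWF : S.WF) {a : S.Node} {e e' : S.Edge} {m : Addr}
    (ha : S.sort a = .ax) (he : S.src e = a) (he' : S.src e' = a) (hne : e' ≠ e)
    (hm : NegOcc (S.typ e) m) : S.BackStep (.atom e' m) (.atom e m) := by
  subst he'
  exact .pos (hWF.posOcc_of_ax ha he rfl hne.symm hm) (.ax ha he hne.symm)

theorem WF.backStep_cut (hWF : S.WF) {c : S.Node} {e e' : S.Edge} {m : Addr}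
    (hc : S.sort c = .cut) (he : S.tgt e = some c) (he' : S.tgt e' = some c) (hne : e' ≠ e)
    (hm : PosOcc (S.typ e) m) : S.BackStep (.atom e' m) (.atom e m) :=
  .neg (hWF.negOcc_of_cut hc he he' hne.symm hm) (.cut he' hc he hne.symm)

theorem WF.backStep_multDown (hWF : S.WF) {n : S.Node} {e g : S.Edge} {m : Addr} {b : Bool}
    (hn : S.sort n = .tens ∨ S.sort n = .parr) (he : S.tgt e = some n) (hg : S.src g = n)
    (hb : S.pIdx e = if b then 1 else 0) (hm : PosOcc (S.typ e) m) :
    S.BackStep (.atom g (b :: m)) (.atom e m) := by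
  subst hg
  exact .pos (by rwa [PosOcc, hWF.sub_mult_concl hn rfl he hb]) (.mult hn he hb)

theorem WF.backStep_multUp (hWF : S.WF) {n : S.Node} {e g : S.Edge} {m : Addr} {b : Bool}
    (hn : S.sort n = .tens ∨ S.sort n = .parr) (hg : S.src g = n) (he : S.tgt e = some n)
    (hb : S.pIdx e = if b then 1 else 0) (hm : NegOcc (S.typ g) (b :: m)) :
    S.BackStep (.atom e m) (.atom g (b :: m)) :=
  .neg (by rwa [NegOcc, ← hWF.sub_mult_concl hn hg he hb]) (.mult he hn hg hb)

theorem WF.backStep_syncDown (hWF : S.WF) {l : S.Node} {e e' : S.Edge} {m : Addr}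
    (hl : S.sort l = .sync) (he : S.tgt e = some l) (hpos : (S.typ e).Positive)
    (hm : AtomOcc (S.typ e) m) (he' : S.src e' = l) (hidx : S.cIdx e' = S.pIdx e) :
    S.BackStep (.atom e' m) (.atom e m) := by
  subst he'
  exact .pos (hWF.sync_typ hl he rfl hidx ▸ hpos.posOcc hm) (.sync hl he hidx.symm)

theorem WF.backStep_syncUp (hWF : S.WF) {l : S.Node} {e e' : S.Edge} {m : Addr}
    (hl : S.sort l = .sync) (he : S.src e = l) (hneg : (S.typ e).Negative)
    (hm : AtomOcc (S.typ e) m) (he' : S.tgt e' = some l) (hidx : S.pIdx e' = S.cIdx e) :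
    S.BackStep (.atom e' m) (.atom e m) :=
  .neg (hWF.sync_typ hl he' he hidx.symm ▸ hneg.negOcc hm) (.sync he' hl he hidx.symm)

end Struct

def SState.Traced {S : Struct} (T : SState S) : Prop :=
  ∀ p v, T.f p = some v → Relation.ReflTransGen S.BackStep v (.atom p.1 p.2)

theorem initState_traced (S : Struct) : (initState S).Traced := by
  intro p v hv
  simp only [initState, Option.ite_none_right_eq_some, Option.some.injEq] at hv
  rw [← hv.2]

theorem SState.Traced.update {S : Struct} {T T' : SState S} {p : S.Edge × Formula.Addr}
    {v : S.PosVal} (hT : T.Traced) (hother : ∀ q, q ≠ p → T'.f q = T.f q)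
    (hnew : T'.f p = some v) (hv : Relation.ReflTransGen S.BackStep v (.atom p.1 p.2)) :
    T'.Traced := by
  intro q w hw
  by_cases hq : q = p
  · subst hq
    rw [hnew] at hw
    cases hw
    exact hv
  · exact hT q w (hother q hq ▸ hw)

theorem Struct.WF.traced_of_sTrans {S : Struct} (hWF : S.WF) {T T' : SState S}
    (hT : T.Traced) (h : STrans S T T') : T'.Traced := by
  cases h with
  | axUp hv hm he ha _ he' hne hother hnew =>
    exact hT.update hother hnew (.head (hWF.backStep_ax ha he he' hne hm) (hT _ _ hv))
  | cutDown hv hm he hc _ he' hne hother hnew =>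
    exact hT.update hother hnew (.head (hWF.backStep_cut hc he he' hne hm) (hT _ _ hv))
  | multDown hv hm he hn _ hg hb hother hnew =>
    exact hT.update hother hnew (.head (hWF.backStep_multDown hn he hg hb hm) (hT _ _ hv))
  | multUp hv hm hg hn _ he hb hother hnew =>
    exact hT.update hother hnew (.head (hWF.backStep_multUp hn hg he hb hm) (hT _ _ hv))
  | lockTok hv _ _ _ _ hother hnew =>
    exact hT.update hother hnew (.head .lock (hT _ _ hv))
  | oneSpawn _ _ _ _ hother hnew =>
    exact hT.update hother hnew .refl
  | @syncCross l hl _ _ _ hdown hup hrest =>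
    intro p v' hv'
    rcases hv : T.f p with _ | v
    · rw [hrest p (by simp [hv])] at hv'
      simp [hv] at hv'
    obtain ⟨e, m⟩ | ⟨e, i⟩ := v
    · have hm := T.val_valid _ _ hv
      by_cases hpos : S.tgt e = some l ∧ (S.typ e).Positive
      · obtain ⟨e', he', hidx, hnew⟩ := hdown p e m hv hpos.1 hpos.2
        rw [hnew, Option.some.injEq] at hv'
        subst hv'
        exact .head (hWF.backStep_syncDown hl hpos.1 hpos.2 hm he' hidx) (hT _ _ hv)
      by_cases hneg : S.src e = l ∧ (S.typ e).Negative
      · obtain ⟨e', he', hidx, hnew⟩ := hup p e m hv hneg.1 hneg.2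
        rw [hnew, Option.some.injEq] at hv'
        subst hv'
        exact .head (hWF.backStep_syncUp hl hneg.1 hneg.2 hm he' hidx) (hT _ _ hv)
      rw [hrest p (by simp_all)] at hv'
      exact hT _ _ hv'
    · rw [hrest p (by simp [hv])] at hv'
      exact hT _ _ hv'

theorem siam_states_injective_general (R : Struct) (hWF : R.WF)
    (T : SState R) (h : Relation.ReflTransGen (STrans R) (initState R) T) :
    ∀ p q v, T.f p = some v → T.f q = some v → p = q := by
  have hT : T.Traced := by
    induction h with
    | refl => exact initState_traced R
    | tail _ hstep ih => exact hWF.traced_of_sTrans ih hstep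
  intro p q v hp hq
  have horigin : Struct.PosVal.atom p.1 p.2 = .atom q.1 q.2 :=
    (hT p v hp).eq_of_rightUnique hWF.backStep_rightUnique (hT q v hq)
      (hWF.not_backStep_of_origin (T.dom_subset p (by simp [hp])))
      (hWF.not_backStep_of_origin (T.dom_subset q (by simp [hq])))
  obtain ⟨h₁, h₂⟩ := Struct.PosVal.atom.inj horigin
  exact Prod.ext h₁ h₂

/-- **Injectivity of reachable SIAM states.**  Every state of the SIAM
machine `M_R` reachable from the initial state `I_R` is an injective
function. -/
theorem siam_states_injective (R : Struct) (hWF : R.WF) (hC : R.Correct)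
    (T : SState R) (h : Relation.ReflTransGen (STrans R) (initState R) T) :
    ∀ p q v, T.f p = some v → T.f q = some v → p = q :=
  siam_states_injective_general R hWF T h
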